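/- Let T be a finite tree with n vertices and let L(T) be its line graph. Then W(L(T)) = W(T) − n(n−1)/2. -/

import Mathlib

open SimpleGraph Polynomial Finset

/-- Distance between vertices, as a function on unordered pairs. -/
noncomputable def sdist {V : Type*} (G : SimpleGraph V) (p : Sym2 V) : ℕ :=
  Sym2.lift ⟨G.dist, fun _ _ => SimpleGraph.dist_comm⟩ p

/-- The Hosoya polynomial `H(G,x) = Σ_{k≥0} d(G,k) x^k`, where `d(G,k)` counts
unordered pairs of vertices at distance `k` (so `d(G,0) = |V(G)|`). -/
noncomputable def hosoyaPoly {V : Type*} [Fintype V] [DecidableEq V]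
    (G : SimpleGraph V) : Polynomial ℝ :=
  ∑ p : Sym2 V, X ^ sdist G p

/-- The edge-Hosoya polynomial, summing over unordered pairs of edges with the
line-graph distance. -/
noncomputable def edgeHosoyaPoly {V : Type*} [Fintype V] [DecidableEq V]
    (G : SimpleGraph V) [DecidableRel G.Adj] : Polynomial ℝ :=
  ∑ p : Sym2 G.edgeSet, X ^ sdist G.lineGraph p

/-- The Wiener index: sum of distances over unordered pairs of vertices. -/
noncomputable def wienerIndex {V : Type*} [Fintype V] [DecidableEq V]
    (G : SimpleGraph V) : ℕ :=
  ∑ p : Sym2 V, sdist G p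

/-- The edge-Wiener index: sum of line-graph distances over unordered pairs of edges. -/
noncomputable def edgeWienerIndex {V : Type*} [Fintype V] [DecidableEq V]
    (G : SimpleGraph V) [DecidableRel G.Adj] : ℕ :=
  ∑ p : Sym2 G.edgeSet, sdist G.lineGraph p

/-- The hyper-Wiener index. -/
noncomputable def hyperWiener {V : Type*} [Fintype V] [DecidableEq V]
    (G : SimpleGraph V) : ℝ :=
  (1/2) * ∑ p : Sym2 V, (sdist G p : ℝ) + (1/2) * ∑ p : Sym2 V, (sdist G p : ℝ)^2

/-- The edge-hyper-Wiener index. -/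
noncomputable def edgeHyperWiener {V : Type*} [Fintype V] [DecidableEq V]
    (G : SimpleGraph V) [DecidableRel G.Adj] : ℝ :=
  (1/2) * ∑ p : Sym2 G.edgeSet, (sdist G.lineGraph p : ℝ) +
  (1/2) * ∑ p : Sym2 G.edgeSet, (sdist G.lineGraph p : ℝ)^2

/-!
Send an ordered pair `(u, v)` of vertices at distance `d ≥ 2` to the first and last edges
`(e, f)` of a shortest `u`–`v` walk. In any graph `d_L(e, f) = d - 1`, and `(u, v)` is the only
pair of endpoints of `e` and `f` at distance `d`, so this map is injective. In a tree
`|E| = n - 1`, so both sides have `(n - 1)(n - 2)` elements and the map is a bijection onto the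
ordered pairs of distinct edges. Summing, `2 W(T) = Σ_{u ≠ v} (d(u, v) - 1) + n(n - 1)
= 2 W(L(T)) + n(n - 1)`.
-/

namespace Sym2

lemma sum_mk_eq_two_nsmul_sum {α M : Type*} [Fintype α] [DecidableEq α] [AddCommMonoid M]
    (f : Sym2 α → M) (hf : ∀ a, f s(a, a) = 0) :
    ∑ x : α × α, f s(x.1, x.2) = 2 • ∑ z : Sym2 α, f z := by
  rw [← Finset.sum_fiberwise' univ (fun x : α × α ↦ s(x.1, x.2)), Finset.smul_sum]
  refine Finset.sum_congr rfl fun z _ ↦ ?_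
  induction z using Sym2.ind with
  | _ a b =>
    rcases eq_or_ne a b with rfl | hab
    · simp [hf]
    · have hfiber :
          {x ∈ (univ : Finset (α × α)) | s(x.1, x.2) = s(a, b)} = {(a, b), (b, a)} := by
        ext ⟨x, y⟩
        simp
      rw [hfiber, sum_pair (by simp [hab])]
      abel

end Sym2

lemma two_mul_wienerIndex {V : Type*} [Fintype V] [DecidableEq V] (G : SimpleGraph V) :
    2 * wienerIndex G = ∑ x : V × V, G.dist x.1 x.2 :=
  (Sym2.sum_mk_eq_two_nsmul_sum (sdist G) fun _ ↦ dist_self).symm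

namespace SimpleGraph

section

variable {V : Type*} {G : SimpleGraph V}

lemma exists_walk_length_le_one_of_mem_edge {e : Sym2 V} (he : e ∈ G.edgeSet) {x y : V}
    (hx : x ∈ e) (hy : y ∈ e) : ∃ p : G.Walk x y, p.length ≤ 1 := by
  rcases eq_or_ne x y with rfl | hxy
  · exact ⟨.nil, by simp⟩
  · rw [(Sym2.mem_and_mem_iff hxy).1 ⟨hx, hy⟩] at he
    exact ⟨.cons he .nil, le_rfl⟩

lemma exists_walk_of_lineGraph_walk {e f : G.edgeSet} (q : G.lineGraph.Walk e f) {x y : V}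
    (hx : x ∈ (e : Sym2 V)) (hy : y ∈ (f : Sym2 V)) :
    ∃ p : G.Walk x y, p.length ≤ q.length + 1 := by
  induction q generalizing x with
  | nil => simpa using exists_walk_length_le_one_of_mem_edge (Subtype.mem _) hx hy
  | cons hadj q ih =>
    obtain ⟨z, hze, hze'⟩ := (lineGraph_adj_iff_exists.1 hadj).2
    obtain ⟨p₁, hp₁⟩ := exists_walk_length_le_one_of_mem_edge (Subtype.mem _) hx hze
    obtain ⟨p₂, hp₂⟩ := ih hze' hy
    exact ⟨p₁.append p₂, by simp only [Walk.length_append, Walk.length_cons]; omega⟩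

lemma dist_le_lineGraph_dist_add_one {e f : G.edgeSet} (h : G.lineGraph.Reachable e f) {x y : V}
    (hx : x ∈ (e : Sym2 V)) (hy : y ∈ (f : Sym2 V)) :
    G.dist x y ≤ G.lineGraph.dist e f + 1 := by
  obtain ⟨q, hq⟩ := h.exists_walk_length_eq_dist
  obtain ⟨p, hp⟩ := exists_walk_of_lineGraph_walk q hx hy
  exact (dist_le p).trans (hq ▸ hp)

namespace Walk

variable {u v : V}

def firstEdge (p : G.Walk u v) (hp : ¬p.Nil) : G.edgeSet :=
  ⟨s(u, p.snd), G.mem_edgeSet.2 (p.adj_snd hp)⟩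

def lastEdge (p : G.Walk u v) (hp : ¬p.Nil) : G.edgeSet :=
  ⟨s(p.penultimate, v), G.mem_edgeSet.2 (p.adj_penultimate hp)⟩

lemma exists_lineGraph_walk_length_lt : ∀ {u v : V} (p : G.Walk u v) (hp : ¬p.Nil),
    ∃ q : G.lineGraph.Walk (p.firstEdge hp) (p.lastEdge hp), q.length < p.length
  | _, _, .nil, hp => absurd .nil hp
  | _, _, .cons _ .nil, _ => ⟨.nil, Nat.one_pos⟩
  | _, _, .cons h (.cons h' p), hp => by
    obtain ⟨q, hq⟩ := exists_lineGraph_walk_length_lt (.cons h' p) not_nil_cons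
    have hlast : (cons h' p).lastEdge not_nil_cons = (cons h (cons h' p)).lastEdge hp := by
      simp only [lastEdge, penultimate_cons_of_not_nil _ _ not_nil_cons]
    suffices ∃ r : G.lineGraph.Walk ((cons h (cons h' p)).firstEdge hp)
        ((cons h' p).lastEdge not_nil_cons), r.length ≤ q.length + 1 by
      obtain ⟨r, hr⟩ := this
      refine ⟨r.copy rfl hlast, ?_⟩
      rw [length_copy, length_cons]
      omega
    by_cases heq : (cons h' p).firstEdge not_nil_cons = (cons h (cons h' p)).firstEdge hp
    · exact ⟨q.copy heq rfl, by rw [length_copy]; omega⟩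
    · exact ⟨.cons (lineGraph_adj_iff_exists.2 ⟨Ne.symm heq, _, Sym2.mem_mk_right _ _,
        Sym2.mem_mk_left _ _⟩) q, le_rfl⟩

lemma lineGraph_dist_firstEdge_lastEdge_add_one (p : G.Walk u v) (hp : ¬p.Nil)
    (hlen : p.length = G.dist u v) :
    G.lineGraph.dist (p.firstEdge hp) (p.lastEdge hp) + 1 = G.dist u v := by
  obtain ⟨q, hq⟩ := p.exists_lineGraph_walk_length_lt hp
  have hle := dist_le_lineGraph_dist_add_one ⟨q⟩ (Sym2.mem_mk_left u p.snd)
    (Sym2.mem_mk_right p.penultimate v)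
  have := dist_le q
  omega

lemma dist_lt_length_of_mem_of_mem (p : G.Walk u v) (h2 : 2 ≤ p.length)
    {x y : V} (hx : x ∈ s(u, p.snd)) (hy : y ∈ s(p.penultimate, v)) (hxy : (x, y) ≠ (u, v)) :
    G.dist x y < p.length := by
  have hsnd : G.dist p.snd v < p.length :=
    (dist_le p.tail).trans_lt (by rw [length_tail]; omega)
  have hpen : G.dist u p.penultimate < p.length :=
    (dist_le p.dropLast).trans_lt (by rw [length_dropLast]; omega)
  have hmid : G.dist p.snd p.penultimate < p.length := by
    have h := dist_le p.dropLast.tail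
    have hdrop : p.dropLast.snd = p.snd := getVert_dropLast (by omega)
    rw [length_tail, length_dropLast, hdrop] at h
    omega
  rw [Sym2.mem_iff] at hx hy
  rcases hx with rfl | rfl <;> rcases hy with rfl | rfl
  · exact hpen
  · exact absurd rfl hxy
  · exact hmid
  · exact hsnd

lemma eq_of_mk_snd_eq_of_mk_penultimate_eq {u' v' : V} {p : G.Walk u v}
    {p' : G.Walk u' v'} (hp : p.length = G.dist u v) (hp' : p'.length = G.dist u' v')
    (h2 : 2 ≤ G.dist u v) (h2' : 2 ≤ G.dist u' v') (hfirst : s(u, p.snd) = s(u', p'.snd))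
    (hlast : s(p.penultimate, v) = s(p'.penultimate, v')) : (u, v) = (u', v') := by
  -- otherwise each of the two pairs would be strictly closer than the other
  by_contra hne
  have hlt := p.dist_lt_length_of_mem_of_mem (hp ▸ h2) (hfirst ▸ Sym2.mem_mk_left _ _)
    (hlast ▸ Sym2.mem_mk_right _ _) (Ne.symm hne)
  have hlt' := p'.dist_lt_length_of_mem_of_mem (hp' ▸ h2') (hfirst ▸ Sym2.mem_mk_left _ _)
    (hlast ▸ Sym2.mem_mk_right _ _) hne
  omega

end Walk

end

section

variable {V : Type*} [Fintype V] [DecidableEq V] {G : SimpleGraph V} [DecidableRel G.Adj]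

lemma Connected.card_two_le_dist_add (hG : G.Connected) :
    #{x : V × V | 2 ≤ G.dist x.1 x.2} + 2 * #G.edgeFinset + Fintype.card V =
      Fintype.card V * Fintype.card V := by
  have hsmall : univ.filter (fun x : V × V ↦ ¬2 ≤ G.dist x.1 x.2) =
      univ.filter (fun (x, y) ↦ G.Adj x y) ∪ univ.diag := by
    ext ⟨u, v⟩
    simp only [mem_filter, mem_univ, true_and, mem_union, mem_diag]
    rw [← dist_eq_one_iff_adj, ← hG.dist_eq_zero_iff]
    omega
  have hdisj : Disjoint (univ.filter fun (x, y) ↦ G.Adj x y) (univ : Finset V).diag :=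
    Finset.disjoint_left.2 fun _ hadj hdiag ↦ (mem_filter.1 hadj).2.ne (mem_diag.1 hdiag).2
  have hdiag : #(univ : Finset V).diag = Fintype.card V := by rw [diag_card, card_univ]
  rw [two_mul_card_edgeFinset, ← hdiag, add_assoc, ← card_union_of_disjoint hdisj,
    ← hsmall, card_filter_add_card_filter_not, card_univ, Fintype.card_prod, hdiag]

lemma IsTree.card_two_le_dist (hT : G.IsTree) :
    #{x : V × V | 2 ≤ G.dist x.1 x.2} = #(univ : Finset G.edgeSet).offDiag := by
  have hcount := hT.connected.card_two_le_dist_add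
  rw [← hT.card_edgeFinset] at hcount
  rw [offDiag_card, card_univ, ← edgeFinset_card]
  have : #{x : V × V | 2 ≤ G.dist x.1 x.2} + #G.edgeFinset = #G.edgeFinset * #G.edgeFinset := by
    nlinarith
  omega

lemma IsTree.sum_dist_sub_one_eq (hT : G.IsTree) :
    ∑ x ∈ {x : V × V | 2 ≤ G.dist x.1 x.2}, (G.dist x.1 x.2 - 1) =
      ∑ e ∈ (univ : Finset G.edgeSet).offDiag, G.lineGraph.dist e.1 e.2 := by
  choose p hp using hT.connected.exists_walk_length_eq_dist
  have hnil : ∀ x ∈ ({x : V × V | 2 ≤ G.dist x.1 x.2} : Finset (V × V)),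
      ¬(p x.1 x.2).Nil := fun x hx ↦ by
    rw [Walk.not_nil_iff_lt_length, hp]
    have := (mem_filter.1 hx).2
    omega
  set endEdges : ∀ x ∈ ({x : V × V | 2 ≤ G.dist x.1 x.2} : Finset (V × V)),
      G.edgeSet × G.edgeSet :=
    fun x hx ↦ ((p x.1 x.2).firstEdge (hnil x hx), (p x.1 x.2).lastEdge (hnil x hx))
  have hdist : ∀ x hx, G.lineGraph.dist (endEdges x hx).1 (endEdges x hx).2 + 1 =
      G.dist x.1 x.2 :=
    fun x hx ↦ (p x.1 x.2).lineGraph_dist_firstEdge_lastEdge_add_one (hnil x hx) (hp _ _)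
  have hmaps : ∀ x hx, endEdges x hx ∈ (univ : Finset G.edgeSet).offDiag := fun x hx ↦ by
    refine mem_offDiag.2 ⟨mem_univ _, mem_univ _, fun h ↦ ?_⟩
    have h1 := hdist x hx
    have h2 := (mem_filter.1 hx).2
    rw [h, dist_self] at h1
    omega
  have hinj : ∀ x y hx hy, endEdges x hx = endEdges y hy → x = y := fun x y hx hy h ↦
    Walk.eq_of_mk_snd_eq_of_mk_penultimate_eq (hp _ _) (hp _ _) (mem_filter.1 hx).2
      (mem_filter.1 hy).2 (congrArg Subtype.val (congrArg Prod.fst h))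
      (congrArg Subtype.val (congrArg Prod.snd h))
  have hsurj := surj_on_of_inj_on_of_card_le endEdges hmaps hinj hT.card_two_le_dist.ge
  refine sum_bij endEdges hmaps (fun x hx y hy ↦ hinj x y hx hy) (fun e he ↦ ?_)
    fun x hx ↦ by have := hdist x hx; omega
  obtain ⟨x, hx, rfl⟩ := hsurj e he
  exact ⟨x, hx, rfl⟩

lemma IsTree.sum_dist_eq (hT : G.IsTree) :
    ∑ x : V × V, G.dist x.1 x.2 =
      ∑ e : G.edgeSet × G.edgeSet, G.lineGraph.dist e.1 e.2 + #(univ : Finset V).offDiag := by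
  have hsplit : ∀ x : V × V,
      G.dist x.1 x.2 = (G.dist x.1 x.2 - 1) + if x ∈ (univ : Finset V).offDiag then 1 else 0 := by
    intro x
    by_cases hx : x.1 = x.2
    · simp [hx]
    · have := hT.connected.pos_dist_of_ne hx
      rw [if_pos (mem_offDiag.2 ⟨mem_univ _, mem_univ _, hx⟩)]
      omega
  rw [sum_congr rfl fun x _ ↦ hsplit x, sum_add_distrib, ← card_eq_sum_ite (subset_univ _),
    ← sum_filter_of_ne (p := fun x : V × V ↦ 2 ≤ G.dist x.1 x.2) fun x _ h ↦ by omega,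
    hT.sum_dist_sub_one_eq,
    sum_subset (subset_univ _) fun e _ he ↦ by simp_all]

end

end SimpleGraph

/-- For a finite tree `T` on `n` vertices,
`W(L(T)) = W(T) - n(n-1)/2`. -/
theorem stmt14 {V : Type*} [Fintype V] [DecidableEq V] (T : SimpleGraph V)
    [DecidableRel T.Adj] (hT : T.IsTree) :
    (wienerIndex T.lineGraph : ℝ) =
      (wienerIndex T : ℝ) - (Fintype.card V : ℝ) * (Fintype.card V - 1) / 2 := by
  have h := hT.sum_dist_eq
  rw [← two_mul_wienerIndex, ← two_mul_wienerIndex, offDiag_card, card_univ] at h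
  have hR := congrArg (Nat.cast : ℕ → ℝ) h
  push_cast [Nat.cast_sub (Nat.le_mul_self _)] at hR
  linarith
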